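/- Weak parabolic maximum principle (Proposition 3.6). Assume the family of conductances (C⁽ⁿ⁾) satisfies (K1) and (Sob) for some α ∈ (0,2] with α < d, σ > 0 and θ ∈ (d/α, ∞), and that sup_x Σ_y C_s⁽ⁿ⁾(x,y) < ∞ for each n. Let n ∈ ℕ, T > 0, σ/n < R ≤ 1 and let B_R⁽ⁿ⁾ ⊂ n⁻¹ℤᵈ be a discrete ball of radius R. Let u be a subsolution of ∂ₜu − L⁽ⁿ⁾u = 0 in (0,T) × B_R⁽ⁿ⁾ such that the positive part u₊(t) belongs to L²_c(B_R⁽ⁿ⁾) for every t ∈ (0,T), ‖u₊(t)‖_{L²(n⁻¹ℤᵈ)} → 0 as t ↘ 0, and u(0,·) ≤ 0 on B_R⁽ⁿ⁾. Then u ≤ 0 everywhere on (0,T) × B_R⁽ⁿ⁾. -/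

import Mathlib

open scoped BigOperators
open MeasureTheory Set

noncomputable section

/-- Lattice points of `n⁻¹ℤᵈ`, indexed by their integer coordinates. -/
abbrev Zd (d : ℕ) := Fin d → ℤ

/-- The point of `ℝᵈ` corresponding to the lattice point `v ∈ n⁻¹ℤᵈ`. -/
def pt (d n : ℕ) (v : Zd d) : EuclideanSpace ℝ (Fin d) := WithLp.toLp 2 (fun i => (v i : ℝ) / (n : ℝ))

/-- The discrete ball `B_r⁽ⁿ⁾(x₀)` in `n⁻¹ℤᵈ` (Euclidean distance). -/
def dBall (d n : ℕ) (x₀ : Zd d) (r : ℝ) : Set (Zd d) :=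
  {x : Zd d | dist (pt d n x) (pt d n x₀) < r}

/-- The lattice unit step in direction `i` (corresponding to `eᵢ/n` after rescaling). -/
def latStep {d : ℕ} (i : Fin d) : Zd d := fun j => if j = i then 1 else 0

/-- Symmetric part of a conductance. -/
def symPart {d : ℕ} (C : Zd d → Zd d → ℝ) (x y : Zd d) : ℝ := (C x y + C y x) / 2

/-- Antisymmetric part of a conductance. -/
def asymPart {d : ℕ} (C : Zd d → Zd d → ℝ) (x y : Zd d) : ℝ := (C x y - C y x) / 2

/-- A conductance: nonnegative, vanishing on the diagonal. -/
def IsConductance {d : ℕ} (C : Zd d → Zd d → ℝ) : Prop :=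
  (∀ x y, 0 ≤ C x y) ∧ (∀ x, C x x = 0)

/-- Membership in `L²(n⁻¹ℤᵈ)`. -/
def MemL2 {d : ℕ} (u : Zd d → ℝ) : Prop := Summable fun x : Zd d => (u x) ^ 2

/-- Squared `L²(n⁻¹ℤᵈ)` norm. -/
def l2normSq (d n : ℕ) (u : Zd d → ℝ) : ℝ := ((n : ℝ) ^ d)⁻¹ * ∑' x : Zd d, (u x) ^ 2

/-- `L²(n⁻¹ℤᵈ)` norm. -/
def l2norm (d n : ℕ) (u : Zd d → ℝ) : ℝ := Real.sqrt (l2normSq d n u)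

/-- `L^p(n⁻¹ℤᵈ)` norm. -/
def lpNorm (d n : ℕ) (p : ℝ) (f : Zd d → ℝ) : ℝ :=
  (((n : ℝ) ^ d)⁻¹ * ∑' x : Zd d, |f x| ^ p) ^ (1 / p)

/-- The bilinear form `ℰ⁽ⁿ⁾(u,v) = 2n^{α−d} Σ_{x,y} (u(x)−u(y))v(x)C(x,y)`. -/
def EForm (d n : ℕ) (α : ℝ) (C : Zd d → Zd d → ℝ) (u v : Zd d → ℝ) : ℝ :=
  2 * (n : ℝ) ^ α * ((n : ℝ) ^ d)⁻¹ *
    ∑' x : Zd d, ∑' y : Zd d, (u x - u y) * v x * C x y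

/-- The symmetric form `ℰ^{(n),J}(v,v) = n^{α−d} Σ_{x,y} (v(x)−v(y))² J(x,y)`. -/
def ESym (d n : ℕ) (α : ℝ) (J : Zd d → Zd d → ℝ) (v : Zd d → ℝ) : ℝ :=
  (n : ℝ) ^ α * ((n : ℝ) ^ d)⁻¹ *
    ∑' x : Zd d, ∑' y : Zd d, (v x - v y) ^ 2 * J x y

/-- The restricted symmetric form `ℰ^{(n),J}_B(v,v)`. -/
def ESymOn (d n : ℕ) (α : ℝ) (J : Zd d → Zd d → ℝ) (B : Set (Zd d)) (v : Zd d → ℝ) : ℝ :=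
  (n : ℝ) ^ α * ((n : ℝ) ^ d)⁻¹ *
    ∑' x : B, ∑' y : B, (v (x : Zd d) - v (y : Zd d)) ^ 2 * J (x : Zd d) (y : Zd d)

/-- Average `[v]_B` of `v` over a (finite) set `B ⊂ n⁻¹ℤᵈ` with respect to `μ⁽ⁿ⁾`. -/
def ballAvg (d : ℕ) (B : Set (Zd d)) (v : Zd d → ℝ) : ℝ :=
  (Nat.card B : ℝ)⁻¹ * ∑' x : B, v (x : Zd d)

/-- The measure `μ⁽ⁿ⁾(B) = n^{−d} · #B`. -/
def muOf (d n : ℕ) (B : Set (Zd d)) : ℝ := ((n : ℝ) ^ d)⁻¹ * (Nat.card B : ℝ)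

/-- The indicator function `𝟙_B`. -/
def indic {d : ℕ} (B : Set (Zd d)) : Zd d → ℝ := B.indicator fun _ => (1 : ℝ)

/-- Assumption (C-Tail0) for a family of symmetric kernels. -/
def CTail0 (d : ℕ) (α : ℝ) (K : ℕ → Zd d → Zd d → ℝ) : Prop :=
  ∃ c > 0, ∀ n : ℕ, 0 < n → ∀ r : ℝ, 0 < r → r ≤ 1 → ∀ x : Zd d,
    (n : ℝ) ^ α * ∑' y : {y : Zd d // y ∉ dBall d n x r}, K n x (y : Zd d) ≤ c * r ^ (-α)

/-- Assumption (C-Tail∞). -/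
def CTailInf (d : ℕ) (α : ℝ) (C : ℕ → Zd d → Zd d → ℝ) : Prop :=
  ∃ c > 0, ∃ δ : ℝ, 0 < δ ∧ ∀ n : ℕ, 0 < n → ∀ r : ℝ, 1 < r → ∀ x : Zd d,
    (n : ℝ) ^ α * ∑' y : {y : Zd d // y ∉ dBall d n x r}, C n x (y : Zd d) ≤ c * r ^ (-δ)

/-- Assumption (K1). -/
def K1 (d : ℕ) (α σ θ : ℝ) (C : ℕ → Zd d → Zd d → ℝ) : Prop :=
  ∃ A > 0, ∃ J : ℕ → Zd d → Zd d → ℝ,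
    (∀ n x y, J n x y = J n y x) ∧ (∀ n x y, 0 ≤ J n x y) ∧ CTail0 d α J ∧
    (∀ n : ℕ, 0 < n →
      lpNorm d n θ
        (fun x => (n : ℝ) ^ α * ∑' y : Zd d, (asymPart (C n) x y) ^ 2 / J n x y) ≤ A) ∧
    (∀ n : ℕ, 0 < n → ∀ x₀ : Zd d, ∀ r : ℝ, σ / (2 * n) < r → ∀ v : Zd d → ℝ,
      ESymOn d n α (J n) (dBall d n x₀ (2 * r)) v
        ≤ A * ESymOn d n α (symPart (C n)) (dBall d n x₀ (2 * r)) v)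

/-- Assumption (K2). -/
def K2 (d : ℕ) (α σ : ℝ) (C : ℕ → Zd d → Zd d → ℝ) : Prop :=
  ∃ CC > 0, ∃ D : ℝ, D < 1 ∧ ∃ j : ℕ → Zd d → Zd d → ℝ,
    (∀ n x y, j n x y = j n y x) ∧ (∀ n x y, 0 ≤ j n x y) ∧
    (∀ n : ℕ, 0 < n → ∀ x₀ x y : Zd d,
      x ∈ dBall d n x₀ 2 → y ∈ dBall d n x₀ 2 → (1 - D) * j n x y ≤ C n x y) ∧
    (∀ n : ℕ, 0 < n → ∀ x₀ : Zd d, ∀ r : ℝ, σ / (2 * n) < r → r ≤ 1 → ∀ v : Zd d → ℝ,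
      ESymOn d n α (symPart (C n)) (dBall d n x₀ (2 * r)) v
        ≤ CC * ESymOn d n α (j n) (dBall d n x₀ (2 * r)) v)

/-- Assumption (Poinc). -/
def Poinc (d : ℕ) (α σ : ℝ) (C : ℕ → Zd d → Zd d → ℝ) : Prop :=
  ∃ c > 0, ∀ n : ℕ, 0 < n → ∀ x₀ : Zd d, ∀ r : ℝ, σ / (2 * n) < r → r ≤ 1 →
    ∀ v : Zd d → ℝ,
      ((n : ℝ) ^ d)⁻¹ *
          ∑' x : dBall d n x₀ r, (v (x : Zd d) - ballAvg d (dBall d n x₀ r) v) ^ 2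
        ≤ c * r ^ α * ESymOn d n α (symPart (C n)) (dBall d n x₀ r) v

/-- Assumption (Sob). -/
def Sob (d : ℕ) (α : ℝ) (C : ℕ → Zd d → Zd d → ℝ) : Prop :=
  ∃ c > 0, ∀ n : ℕ, 0 < n → ∀ v : Zd d → ℝ,
    lpNorm d n ((d : ℝ) / ((d : ℝ) - α)) (fun x => (v x) ^ 2)
      ≤ c * ESym d n α (symPart (C n)) v

/-- Membership in `L²_c(B)`: square-summable and vanishing outside `B`. -/
def MemL2c {d : ℕ} (B : Set (Zd d)) (φ : Zd d → ℝ) : Prop :=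
  MemL2 φ ∧ ∀ x, x ∉ B → φ x = 0

/-- The function space `V(B|n⁻¹ℤᵈ)`. -/
def VSpace {d : ℕ} (C : Zd d → Zd d → ℝ) (B : Set (Zd d)) (f : Zd d → ℝ) : Prop :=
  Summable (fun x : B => (f (x : Zd d)) ^ 2) ∧
  Summable (fun p : B × Zd d => (f (p.1 : Zd d) - f p.2) ^ 2 * symPart C (p.1 : Zd d) p.2)

/-- Supersolution of `∂ₜu − L⁽ⁿ⁾u = 0` in `I × B` (with time derivative `u'`). -/
def ParabolicSupersol (d n : ℕ) (α : ℝ) (C : Zd d → Zd d → ℝ) (I : Set ℝ)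
    (B : Set (Zd d)) (u u' : ℝ → Zd d → ℝ) : Prop :=
  (∀ t ∈ I, VSpace C B (u t)) ∧
  (∀ x ∈ B, ∀ t ∈ I, HasDerivAt (fun s => u s x) (u' t x) t) ∧
  (∀ t ∈ I, ∀ φ : Zd d → ℝ, MemL2c B φ → (∀ x, φ x ≤ 0) →
    ((n : ℝ) ^ d)⁻¹ * (∑' x : B, u' t (x : Zd d) * φ (x : Zd d))
      + EForm d n α C (u t) φ ≤ 0)

/-- Subsolution of `∂ₜu − L⁽ⁿ⁾u = 0` in `I × B` (with time derivative `u'`). -/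
def ParabolicSubsol (d n : ℕ) (α : ℝ) (C : Zd d → Zd d → ℝ) (I : Set ℝ)
    (B : Set (Zd d)) (u u' : ℝ → Zd d → ℝ) : Prop :=
  (∀ t ∈ I, MemL2 (u t)) ∧
  (∀ x ∈ B, ∀ t ∈ I, HasDerivAt (fun s => u s x) (u' t x) t) ∧
  (∀ t ∈ I, ∀ φ : Zd d → ℝ, MemL2c B φ → (∀ x, 0 ≤ φ x) →
    ((n : ℝ) ^ d)⁻¹ * (∑' x : B, u' t (x : Zd d) * φ (x : Zd d))
      + EForm d n α C (u t) φ ≤ 0)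

/-- Solution of `∂ₜu − L⁽ⁿ⁾u = 0` in `I × B` (with time derivative `u'`). -/
def ParabolicSol (d n : ℕ) (α : ℝ) (C : Zd d → Zd d → ℝ) (I : Set ℝ)
    (B : Set (Zd d)) (u u' : ℝ → Zd d → ℝ) : Prop :=
  (∀ x ∈ B, ∀ t ∈ I, HasDerivAt (fun s => u s x) (u' t x) t) ∧
  (∀ t ∈ I, ∀ φ : Zd d → ℝ, MemL2c B φ →
    ((n : ℝ) ^ d)⁻¹ * (∑' x : B, u' t (x : Zd d) * φ (x : Zd d))
      + EForm d n α C (u t) φ = 0)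

/-- Supersolution of `−L⁽ⁿ⁾u = 0` in `B`. -/
def EllipticSupersol (d n : ℕ) (α : ℝ) (C : Zd d → Zd d → ℝ) (B : Set (Zd d))
    (u : Zd d → ℝ) : Prop :=
  VSpace C B u ∧
  ∀ φ : Zd d → ℝ, MemL2c B φ → (∀ x, φ x ≤ 0) → EForm d n α C u φ ≤ 0

/-- Solution of `−L⁽ⁿ⁾u = 0` in `B`. -/
def EllipticSol (d n : ℕ) (α : ℝ) (C : Zd d → Zd d → ℝ) (B : Set (Zd d))
    (u : Zd d → ℝ) : Prop :=
  ∀ φ : Zd d → ℝ, MemL2c B φ → EForm d n α C u φ = 0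

/-- The generator `L⁽ⁿ⁾u(x) = 2n^α Σ_y (u(y)−u(x))C(x,y)`, pointwise. -/
def Lgen (d n : ℕ) (α : ℝ) (C : Zd d → Zd d → ℝ) (u : Zd d → ℝ) (x : Zd d) : ℝ :=
  2 * (n : ℝ) ^ α * ∑' y : Zd d, (u y - u x) * C x y

/-- `P : ℝ → (n⁻¹ℤᵈ → ℝ)` is the heat semigroup orbit `t ↦ exp(tL⁽ⁿ⁾)f` of `f`:
it is `L²`-valued, starts at `f` and solves the (pointwise) ODE `∂ₜ P = L⁽ⁿ⁾P`.
For the bounded operator `L⁽ⁿ⁾` this characterizes `exp(tL⁽ⁿ⁾)f` uniquely. -/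
def IsHeatSemigroup (d n : ℕ) (α : ℝ) (C : Zd d → Zd d → ℝ) (f : Zd d → ℝ)
    (P : ℝ → Zd d → ℝ) : Prop :=
  P 0 = f ∧ (∀ t, MemL2 (P t)) ∧
  ∀ t : ℝ, ∀ x : Zd d, HasDerivAt (fun s => P s x) (Lgen d n α C (P t) x) t

/-- The killed generator `(L^B u)(x) = 𝟙_B(x)·2n^α Σ_y (u(y)𝟙_B(y) − u(x))C(x,y)`. -/
def LgenKilled (d n : ℕ) (α : ℝ) (C : Zd d → Zd d → ℝ) (B : Set (Zd d))
    (u : Zd d → ℝ) (x : Zd d) : ℝ :=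
  B.indicator
    (fun z => 2 * (n : ℝ) ^ α * ∑' y : Zd d, (B.indicator u y - u z) * C z y) x

/-- `P` is the killed heat semigroup orbit `t ↦ exp(tL^B)f` of `f`. -/
def IsKilledHeatSemigroup (d n : ℕ) (α : ℝ) (C : Zd d → Zd d → ℝ) (B : Set (Zd d))
    (f : Zd d → ℝ) (P : ℝ → Zd d → ℝ) : Prop :=
  P 0 = f ∧ (∀ t, MemL2 (P t)) ∧
  ∀ t : ℝ, ∀ x : Zd d, HasDerivAt (fun s => P s x) (LgenKilled d n α C B (P t) x) t

/-!
For `n > 0` the discrete ball `B = B_R⁽ⁿ⁾(x₀)` is finite, so `F(t) = ‖u₊(t)‖²` is a finite sum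
over `B` and, testing the subsolution inequality with `u₊(t)`,
`F'(t) = 2⟨∂ₜu, u₊⟩ ≤ -2ℰ⁽ⁿ⁾(u, u₊)`. The pointwise bound `(p - q) p₊ ≥ -q₊²/2` reduces
`-ℰ⁽ⁿ⁾(u, u₊)` to the column sums `Σ_{x ∈ B} C(x,y) ≤ 2 Σ_x C_s(y,x) ≤ 2M`, where `M` bounds the
row sums of `C_s`; whence `F' ≤ 4M n^α F`. Gronwall's argument together with `F(0+) = 0` forces `F ≡ 0` on `(0,T)`.
-/

open Filter Topology

theorem dBall_finite {d n : ℕ} (hn : 0 < n) (x₀ : Zd d) (r : ℝ) :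
    (dBall d n x₀ r).Finite := by
  refine (Set.finite_Icc (x₀ - fun _ => ⌈n * r⌉) (x₀ + fun _ => ⌈n * r⌉)).subset
    fun x hx => ?_
  have hcoord : ∀ i, |x i - x₀ i| ≤ ⌈n * r⌉ := fun i => by
    have h := (PiLp.dist_apply_le (pt d n x) (pt d n x₀) i).trans_lt hx
    rw [pt, pt, PiLp.toLp_apply, PiLp.toLp_apply, Real.dist_eq, ← sub_div, abs_div,
      Nat.abs_cast, div_lt_iff₀' (by exact_mod_cast hn)] at h
    exact_mod_cast h.le.trans (Int.le_ceil _)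
  constructor <;> intro i <;> simp only [Pi.sub_apply, Pi.add_apply] <;>
    linarith [abs_le.mp (hcoord i)]

theorem hasDerivAt_max_zero_sq (a : ℝ) :
    HasDerivAt (fun s => max s 0 ^ 2) (2 * max a 0) a := by
  -- the remainder `s₊² - a₊² - 2a₊(s - a)` lies in `[0, (s - a)²]`
  rw [hasDerivAt_iff_isLittleO]
  refine (Asymptotics.IsBigO.of_bound 1 (Filter.Eventually.of_forall fun s => ?_)).trans_isLittleO
    (Asymptotics.isLittleO_pow_sub_sub a one_lt_two)
  rw [Real.norm_eq_abs, Real.norm_eq_abs, Real.norm_eq_abs, one_mul, sq_abs, abs_sq,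
    smul_eq_mul, abs_le]
  rcases le_total s 0 with hs | hs <;> rcases le_total a 0 with ha | ha <;>
    simp only [max_eq_left, max_eq_right, hs, ha] <;> constructor <;> nlinarith

theorem HasDerivAt.max_zero_sq {f : ℝ → ℝ} {f' t : ℝ} (hf : HasDerivAt f f' t) :
    HasDerivAt (fun s => max (f s) 0 ^ 2) (2 * max (f t) 0 * f') t :=
  (hasDerivAt_max_zero_sq (f t)).comp t hf

theorem nonpos_of_deriv_le_mul_of_tendsto_zero {F F' : ℝ → ℝ} {K a b : ℝ}
    (hF : ∀ t ∈ Ioo a b, HasDerivAt F (F' t) t) (hF' : ∀ t ∈ Ioo a b, F' t ≤ K * F t)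
    (hlim : Tendsto F (𝓝[>] a) (𝓝 0)) {t : ℝ} (ht : t ∈ Ioo a b) : F t ≤ 0 := by
  set g : ℝ → ℝ := fun s => F s * Real.exp (-K * s)
  have hg : ∀ s ∈ Ioo a b,
      HasDerivAt g (Real.exp (-K * s) * (F' s - K * F s)) s := fun s hs =>
    ((hF s hs).fun_mul ((hasDerivAt_id' s).const_mul (-K)).exp).congr_deriv (by ring)
  have hanti : AntitoneOn g (Ioo a b) :=
    antitoneOn_of_hasDerivWithinAt_nonpos (convex_Ioo a b)
      (fun s hs => (hg s hs).continuousAt.continuousWithinAt)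
      (fun s hs => (hg s (interior_subset hs)).hasDerivWithinAt)
      (fun s hs => mul_nonpos_of_nonneg_of_nonpos (Real.exp_pos _).le
        (sub_nonpos.mpr (hF' s (interior_subset hs))))
  have hglim : Tendsto g (𝓝[>] a) (𝓝 0) := by
    have hexp : ContinuousWithinAt (fun s => Real.exp (-K * s)) (Ioi a) a :=
      (Real.continuous_exp.comp (continuous_const_mul (-K))).continuousWithinAt
    simpa [g] using hlim.mul hexp
  have hgt : g t ≤ 0 := ge_of_tendsto hglim <| by
    filter_upwards [Ioo_mem_nhdsGT ht.1] with s hs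
    exact hanti ⟨hs.1, hs.2.trans ht.2⟩ ht hs.2.le
  exact nonpos_of_mul_nonpos_left hgt (Real.exp_pos _)

def SymPartRowSumLE {d : ℕ} (C : Zd d → Zd d → ℝ) (M : ℝ) : Prop :=
  ∀ x, Summable (fun y => symPart C x y) ∧ ∑' y, symPart C x y ≤ M

section Conductance

variable {d : ℕ} {C : Zd d → Zd d → ℝ} {M : ℝ}

theorem two_mul_symPart (C : Zd d → Zd d → ℝ) (x y : Zd d) :
    2 * symPart C x y = C x y + C y x := by
  rw [symPart]; ring

theorem le_two_mul_symPart (hC : ∀ x y, 0 ≤ C x y) (x y : Zd d) :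
    C x y ≤ 2 * symPart C x y := by
  linarith [hC y x, two_mul_symPart C x y]

theorem symPart_nonneg (hC : ∀ x y, 0 ≤ C x y) (x y : Zd d) : 0 ≤ symPart C x y := by
  linarith [hC x y, hC y x, two_mul_symPart C x y]

theorem SymPartRowSumLE.summable (hC : ∀ x y, 0 ≤ C x y) (hM : SymPartRowSumLE C M)
    (x : Zd d) : Summable (C x) :=
  .of_nonneg_of_le (hC x) (le_two_mul_symPart hC x) ((hM x).1.mul_left 2)

theorem SymPartRowSumLE.sum_symPart_le (hC : ∀ x y, 0 ≤ C x y) (hM : SymPartRowSumLE C M)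
    (x : Zd d) (B : Finset (Zd d)) : ∑ y ∈ B, symPart C x y ≤ M :=
  ((hM x).1.sum_le_tsum B fun y _ => symPart_nonneg hC x y).trans (hM x).2

theorem SymPartRowSumLE.apply_le (hC : ∀ x y, 0 ≤ C x y) (hM : SymPartRowSumLE C M)
    (x y : Zd d) : C x y ≤ 2 * M := by
  have := hM.sum_symPart_le hC x {y}
  rw [Finset.sum_singleton] at this
  linarith [le_two_mul_symPart hC x y]

theorem SymPartRowSumLE.column_sum_le (hC : ∀ x y, 0 ≤ C x y) (hM : SymPartRowSumLE C M)
    (B : Finset (Zd d)) (y : Zd d) : ∑ x ∈ B, C x y ≤ 2 * M :=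
  calc ∑ x ∈ B, C x y ≤ ∑ x ∈ B, 2 * symPart C y x :=
        Finset.sum_le_sum fun x _ => by linarith [hC y x, two_mul_symPart C y x]
    _ ≤ 2 * M := by rw [← Finset.mul_sum]; linarith [hM.sum_symPart_le hC y B]

theorem SymPartRowSumLE.summable_mul (hC : ∀ x y, 0 ≤ C x y) (hM : SymPartRowSumLE C M)
    {v : Zd d → ℝ} (hv : MemL2 v) (x : Zd d) : Summable fun y => v y * C x y := by
  refine .of_norm_bounded (hv.add ((hM.summable hC x).mul_left (2 * M))) fun y => ?_
  rw [Real.norm_eq_abs, abs_mul, abs_of_nonneg (hC x y)]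
  nlinarith [sq_nonneg (|v y| - C x y), sq_abs (v y), hC x y, hM.apply_le hC x y]

theorem neg_half_sq_max_zero_le (p q : ℝ) : -(max q 0 ^ 2 / 2) ≤ (p - q) * max p 0 := by
  rcases le_total p 0 with hp | hp <;> rcases le_total q 0 with hq | hq <;>
    simp only [max_eq_left, max_eq_right, hp, hq] <;> nlinarith [sq_nonneg (p - q)]

theorem sum_tsum_sub_mul_max_zero_ge (hC : ∀ x y, 0 ≤ C x y) (hM : SymPartRowSumLE C M)
    {v : Zd d → ℝ} (hv : MemL2 v) {B : Finset (Zd d)} (hvB : ∀ x ∉ B, max (v x) 0 = 0) :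
    -(M * ∑ x ∈ B, max (v x) 0 ^ 2)
      ≤ ∑ x ∈ B, ∑' y, (v x - v y) * max (v x) 0 * C x y := by
  have hrow : ∀ x, -(∑ y ∈ B, max (v y) 0 ^ 2 * C x y) / 2
      ≤ ∑' y, (v x - v y) * max (v x) 0 * C x y := fun x => by
    have hsum : Summable fun y => (v x - v y) * max (v x) 0 * C x y :=
      (((hM.summable hC x).mul_left (v x)).sub (hM.summable_mul hC hv x)).mul_left (max (v x) 0)
        |>.congr fun y => by ring
    have hB : ∀ y ∉ B, -(max (v y) 0 ^ 2 / 2) * C x y = 0 := fun y hy => by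
      rw [hvB y hy]; ring
    calc -(∑ y ∈ B, max (v y) 0 ^ 2 * C x y) / 2
        = ∑' y, -(max (v y) 0 ^ 2 / 2) * C x y := by
          rw [tsum_eq_sum hB, neg_div, Finset.sum_div, ← Finset.sum_neg_distrib]
          exact Finset.sum_congr rfl fun y _ => by ring
      _ ≤ _ := (summable_of_ne_finset_zero hB).tsum_le_tsum
          (fun y => mul_le_mul_of_nonneg_right (neg_half_sq_max_zero_le _ _) (hC x y)) hsum
  have hcol : ∑ x ∈ B, ∑ y ∈ B, max (v y) 0 ^ 2 * C x y
      ≤ 2 * M * ∑ y ∈ B, max (v y) 0 ^ 2 := by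
    rw [Finset.sum_comm, Finset.mul_sum]
    exact Finset.sum_le_sum fun y _ => by
      rw [← Finset.mul_sum, mul_comm]
      exact mul_le_mul_of_nonneg_right (hM.column_sum_le hC B y) (sq_nonneg _)
  calc -(M * ∑ x ∈ B, max (v x) 0 ^ 2)
      ≤ ∑ x ∈ B, -(∑ y ∈ B, max (v y) 0 ^ 2 * C x y) / 2 := by
        rw [← Finset.sum_div, Finset.sum_neg_distrib]; linarith
    _ ≤ _ := Finset.sum_le_sum fun x _ => hrow x

theorem EForm_max_zero_ge (n : ℕ) (α : ℝ) (hC : ∀ x y, 0 ≤ C x y)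
    (hM : SymPartRowSumLE C M) {v : Zd d → ℝ} (hv : MemL2 v) {B : Finset (Zd d)}
    (hvB : ∀ x ∉ B, max (v x) 0 = 0) :
    -(2 * M * (n : ℝ) ^ α * (((n : ℝ) ^ d)⁻¹ * ∑ x ∈ B, max (v x) 0 ^ 2))
      ≤ EForm d n α C v (fun x => max (v x) 0) := by
  rw [EForm, tsum_eq_sum (s := B) fun x hx => by simp [hvB x hx]]
  have hpos : (0 : ℝ) ≤ 2 * (n : ℝ) ^ α * ((n : ℝ) ^ d)⁻¹ := by positivity
  linarith [mul_le_mul_of_nonneg_left (sum_tsum_sub_mul_max_zero_ge hC hM hv hvB) hpos]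

end Conductance

section Subsolution

variable {d n : ℕ} {α : ℝ} {C : Zd d → Zd d → ℝ} {I : Set ℝ} {B : Finset (Zd d)}
  {u u' : ℝ → Zd d → ℝ} {t : ℝ}

theorem ParabolicSubsol.hasDerivAt_sum_sq_max_zero (hsub : ParabolicSubsol d n α C I ↑B u u')
    (ht : t ∈ I) :
    HasDerivAt (fun s => ((n : ℝ) ^ d)⁻¹ * ∑ x ∈ B, max (u s x) 0 ^ 2)
      (((n : ℝ) ^ d)⁻¹ * ∑ x ∈ B, 2 * max (u t x) 0 * u' t x) t :=
  (HasDerivAt.fun_sum fun x hx => (hsub.2.1 x hx t ht).max_zero_sq).const_mul _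

theorem ParabolicSubsol.sum_deriv_le {M : ℝ} (hC : ∀ x y, 0 ≤ C x y)
    (hM : SymPartRowSumLE C M) (hsub : ParabolicSubsol d n α C I ↑B u u') (ht : t ∈ I)
    (hsupp : MemL2c ↑B fun x => max (u t x) 0) :
    ((n : ℝ) ^ d)⁻¹ * ∑ x ∈ B, 2 * max (u t x) 0 * u' t x
      ≤ 4 * M * (n : ℝ) ^ α * (((n : ℝ) ^ d)⁻¹ * ∑ x ∈ B, max (u t x) 0 ^ 2) := by
  have hsol := hsub.2.2 t ht _ hsupp fun x => le_max_right _ _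
  rw [Finset.tsum_subtype' B fun x => u' t x * max (u t x) 0] at hsol
  have hE := EForm_max_zero_ge n α hC hM (hsub.1 t ht) (B := B) fun x hx => hsupp.2 x hx
  have hsum : ∑ x ∈ B, 2 * max (u t x) 0 * u' t x
      = 2 * ∑ x ∈ B, u' t x * max (u t x) 0 := by
    rw [Finset.mul_sum]; exact Finset.sum_congr rfl fun x _ => by ring
  rw [hsum]
  linarith

end Subsolution

theorem l2norm_sq_eq_sum {d : ℕ} (n : ℕ) {B : Finset (Zd d)} {f : Zd d → ℝ}
    (hf : ∀ x ∉ B, f x = 0) :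
    l2norm d n f ^ 2 = ((n : ℝ) ^ d)⁻¹ * ∑ x ∈ B, f x ^ 2 := by
  rw [l2norm, l2normSq, tsum_eq_sum (s := B) fun x hx => by simp [hf x hx],
    Real.sq_sqrt (by positivity)]

theorem le_zero_of_sum_sq_max_zero_nonpos {d n : ℕ} (hn : 0 < n) {B : Finset (Zd d)}
    {f : Zd d → ℝ} (hf : ((n : ℝ) ^ d)⁻¹ * ∑ x ∈ B, max (f x) 0 ^ 2 ≤ 0) {x : Zd d}
    (hx : x ∈ B) : f x ≤ 0 := by
  have hsum : ∑ x ∈ B, max (f x) 0 ^ 2 ≤ 0 :=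
    nonpos_of_mul_nonpos_right hf (by positivity)
  have hx2 := (Finset.single_le_sum (fun y _ => sq_nonneg (max (f y) 0)) hx).trans hsum
  nlinarith [le_max_left (f x) 0, le_max_right (f x) 0]

theorem weak_parabolic_maximum_principle_general
    (d : ℕ) (α : ℝ)
    (C : ℕ → Zd d → Zd d → ℝ) (hC : ∀ n, IsConductance (C n))
    (hbd : ∀ n : ℕ, 0 < n → ∃ M : ℝ, ∀ x : Zd d,
      Summable (fun y : Zd d => symPart (C n) x y) ∧
        ∑' y : Zd d, symPart (C n) x y ≤ M)
    (n : ℕ) (hn : 0 < n) (T : ℝ)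
    (R : ℝ) (x₀ : Zd d)
    (u u' : ℝ → Zd d → ℝ)
    (hsub : ParabolicSubsol d n α (C n) (Set.Ioo 0 T) (dBall d n x₀ R) u u')
    (hposL2c : ∀ t ∈ Set.Ioo (0 : ℝ) T,
      MemL2c (dBall d n x₀ R) (fun x => max (u t x) 0))
    (hinitnorm : Filter.Tendsto (fun t => l2norm d n (fun x => max (u t x) 0))
      (nhdsWithin 0 (Set.Ioi 0)) (nhds 0)) :
    ∀ t ∈ Set.Ioo (0 : ℝ) T, ∀ x ∈ dBall d n x₀ R, u t x ≤ 0 := by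
  intro t ht x hx
  obtain ⟨M, hM⟩ := hbd n hn
  have hBfin := dBall_finite hn x₀ R
  rw [← hBfin.coe_toFinset] at hsub hposL2c hx
  set B := hBfin.toFinset
  set F := fun s => ((n : ℝ) ^ d)⁻¹ * ∑ x ∈ B, max (u s x) 0 ^ 2
  have hF0 : Tendsto F (𝓝[>] 0) (𝓝 0) := by
    refine ((zero_pow two_ne_zero (M₀ := ℝ)) ▸ hinitnorm.pow 2).congr' ?_
    filter_upwards [Ioo_mem_nhdsGT (ht.1.trans ht.2)] with s hs
    exact l2norm_sq_eq_sum n (hposL2c s hs).2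
  have hFt : F t ≤ 0 :=
    nonpos_of_deriv_le_mul_of_tendsto_zero (fun s hs => hsub.hasDerivAt_sum_sq_max_zero hs)
      (fun s hs => hsub.sum_deriv_le (hC n).1 hM hs (hposL2c s hs)) hF0 ht
  exact le_zero_of_sum_sq_max_zero_nonpos hn hFt hx

/-- **Proposition 3.6 (weak parabolic maximum principle).** -/
theorem weak_parabolic_maximum_principle
    (d : ℕ) (hd : 1 ≤ d) (α σ θ : ℝ)
    (hα0 : 0 < α) (hα2 : α ≤ 2) (hαd : α < (d : ℝ)) (hσ : 0 < σ)
    (hθ : (d : ℝ) / α < θ)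
    (C : ℕ → Zd d → Zd d → ℝ) (hC : ∀ n, IsConductance (C n))
    (hK1 : K1 d α σ θ C) (hSob : Sob d α C)
    (hbd : ∀ n : ℕ, 0 < n → ∃ M : ℝ, ∀ x : Zd d,
      Summable (fun y : Zd d => symPart (C n) x y) ∧
        ∑' y : Zd d, symPart (C n) x y ≤ M)
    (n : ℕ) (hn : 0 < n) (T : ℝ) (hT : 0 < T)
    (R : ℝ) (hR1 : σ / n < R) (hR2 : R ≤ 1) (x₀ : Zd d)
    (u u' : ℝ → Zd d → ℝ)
    (hsub : ParabolicSubsol d n α (C n) (Set.Ioo 0 T) (dBall d n x₀ R) u u')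
    (hposL2c : ∀ t ∈ Set.Ioo (0 : ℝ) T,
      MemL2c (dBall d n x₀ R) (fun x => max (u t x) 0))
    (hinitnorm : Filter.Tendsto (fun t => l2norm d n (fun x => max (u t x) 0))
      (nhdsWithin 0 (Set.Ioi 0)) (nhds 0))
    (hinit : ∀ x ∈ dBall d n x₀ R, u 0 x ≤ 0) :
    ∀ t ∈ Set.Ioo (0 : ℝ) T, ∀ x ∈ dBall d n x₀ R, u t x ≤ 0 :=
  weak_parabolic_maximum_principle_general d α C hC hbd n hn T R x₀ u u' hsub hposL2c hinitnorm
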